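/- arXiv:1510.02657 — 4 statements merged into one kernel-verified Lean document; each statement's English description precedes it below -/
import Mathlib

section
/- Let Q^A, Q^B : ℕ → ℕ be non-increasing sequences with Q^A(i) ≤ Q^B(i) ≤ N for all i ≥ 1, and fix k ∈ {1,...,N}. Define the removal update: for Π ∈ {A,B}, set Q̃^Π(i) = Q^Π(i) - 1 if i = I_Π(k) ≥ 1 and Q̃^Π(i) = Q^Π(i) otherwise, where I_Π(k) = sup {i : Q^Π(i) ≥ N - k + 1} (0 if empty). Then Q̃^A(i) ≤ Q̃^B(i) for all i ≥ 1. -/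
/-- `Ifun N Q c` is the height of the `c`-th shortest stack:
`sup {i ≥ 1 : Q i ≥ N - c + 1}`, with value `0` if the set is empty. -/
noncomputable def Ifun (N : ℕ) (Q : ℕ → ℕ) (c : ℕ) : ℕ :=
  sSup {i | 1 ≤ i ∧ N - c + 1 ≤ Q i}

/-- Removal update: remove an item from the `k`-th shortest stack, i.e.
decrement `Q` at index `I(k)` when `I(k) ≥ 1`. -/
noncomputable def remQ (N : ℕ) (Q : ℕ → ℕ) (k : ℕ) : ℕ → ℕ :=
  fun i => if i = Ifun N Q k ∧ 1 ≤ Ifun N Q k then Q i - 1 else Q i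

/-! At the index where `B` loses an item, `Q^B` reaches the threshold `N - k + 1`. If `Q^A` did
too, that index would lie in the threshold set of `A`, which is contained in that of `B`, and so
it would also be the supremum `I_A(k)`: then both ensembles lose an item at the same place.
Otherwise `Q^A` is strictly below `Q^B` there, leaving room for the decrement. -/

namespace Nat

theorem bddAbove_of_pos_sSup {s : Set ℕ} (h : 0 < sSup s) : BddAbove s := by
  by_contra hs
  exact h.ne' (sSup_of_not_bddAbove hs)

theorem nonempty_of_pos_sSup {s : Set ℕ} (h : 0 < sSup s) : s.Nonempty := by
  rw [Set.nonempty_iff_ne_empty]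
  rintro rfl
  simp at h

theorem sSup_mem_of_pos {s : Set ℕ} (h : 0 < sSup s) : sSup s ∈ s :=
  sSup_mem (nonempty_of_pos_sSup h) (bddAbove_of_pos_sSup h)

theorem sSup_eq_of_subset_of_sSup_mem {s t : Set ℕ} (hst : s ⊆ t) (ht : 0 < sSup t)
    (hmem : sSup t ∈ s) : sSup s = sSup t :=
  le_antisymm (csSup_le_csSup' (bddAbove_of_pos_sSup ht) hst)
    (le_csSup ((bddAbove_of_pos_sSup ht).mono hst) hmem)

end Nat

section Ifun

variable {N c : ℕ} {Q Q' : ℕ → ℕ}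

theorem le_apply_Ifun (h : 1 ≤ Ifun N Q c) : N - c + 1 ≤ Q (Ifun N Q c) :=
  (Nat.sSup_mem_of_pos h).2

theorem apply_Ifun_lt_of_Ifun_ne (hQ : ∀ i, Q i ≤ Q' i) (h' : 1 ≤ Ifun N Q' c)
    (hne : Ifun N Q c ≠ Ifun N Q' c) : Q (Ifun N Q' c) < N - c + 1 := by
  by_contra! hle
  exact hne <| Nat.sSup_eq_of_subset_of_sSup_mem (fun i hi => ⟨hi.1, hi.2.trans (hQ i)⟩) h' ⟨h', hle⟩

end Ifun

theorem stmt_3_general (N : ℕ) (QA QB : ℕ → ℕ)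
    (hAB : ∀ i, QA i ≤ QB i)
    (k : ℕ) :
    ∀ i, 1 ≤ i → remQ N QA k i ≤ remQ N QB k i := by
  intro i _
  unfold remQ
  split_ifs with hA hB hB
  · exact Nat.sub_le_sub_right (hAB i) 1
  · exact (Nat.sub_le _ _).trans (hAB i)
  · obtain ⟨rfl, hpos⟩ := hB
    have hne : Ifun N QA k ≠ Ifun N QB k := fun h => hA ⟨h.symm, h ▸ hpos⟩
    have hltA := apply_Ifun_lt_of_Ifun_ne hAB hpos hne
    have hleB := le_apply_Ifun hpos
    omega
  · exact hAB i

/-- Removing an item from the `k`-th shortest stack in both ensembles preserves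
the componentwise ordering of the occupancy vectors. -/
theorem stmt_3 (N : ℕ) (QA QB : ℕ → ℕ)
    (hmA : ∀ i j, i ≤ j → QA j ≤ QA i)
    (hmB : ∀ i j, i ≤ j → QB j ≤ QB i)
    (hAB : ∀ i, QA i ≤ QB i)
    (hbdB : ∀ i, QB i ≤ N)
    (hfinA : ∃ b, QA (b + 1) = 0)
    (hfinB : ∃ b, QB (b + 1) = 0)
    (k : ℕ) (hk1 : 1 ≤ k) (hkN : k ≤ N) :
    ∀ i, 1 ≤ i → remQ N QA k i ≤ remQ N QB k i :=
  stmt_3_general N QA QB hAB k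
end

section
/- Let Q^A, Q^B : ℕ → ℕ be non-increasing with Q^A(i) ≤ Q^B(i) ≤ N for all i, and fix l ∈ {1,...,N}. Define the addition update: for Π ∈ {A,B}, with I_Π(l) = sup {i : Q^Π(i) ≥ N - l + 1} (0 if empty), set Q̃^Π(i) = Q^Π(i) + 1 if i = I_Π(l) + 1 and Q̃^Π(i) = Q^Π(i) otherwise. Then Q̃^A(i) ≤ Q̃^B(i) for all i ≥ 1. -/
/-- Addition update (no capacity constraint): add an item to the `l`-th shortest
stack, i.e. increment `Q` at index `I(l) + 1`. -/
noncomputable def addQ (N : ℕ) (Q : ℕ → ℕ) (l : ℕ) : ℕ → ℕ :=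
  fun i => if i = Ifun N Q l + 1 then Q i + 1 else Q i

theorem ite_succ_le_ite_succ {f g : ℕ → ℕ} {a b : ℕ} (hfg : f ≤ g) (hab : a ≤ b)
    (hlt : a < b → f a < g a) (i : ℕ) :
    (if i = a then f i + 1 else f i) ≤ if i = b then g i + 1 else g i := by
  have hi : f i ≤ g i := hfg i
  split_ifs with ha hb hb
  · exact Nat.succ_le_succ hi
  · subst ha
    exact hlt (by omega)
  · exact hi.trans (Nat.le_succ _)
  · exact hi

section Ifun

variable {N c : ℕ} {Q Q' : ℕ → ℕ}

theorem bddAbove_Ifun_set_of_antitone (hQ : Antitone Q) (hfin : ∃ b, Q (b + 1) = 0) :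
    BddAbove {i | 1 ≤ i ∧ N - c + 1 ≤ Q i} := by
  obtain ⟨b, hb⟩ := hfin
  refine ⟨b, fun i hi => ?_⟩
  by_contra! hbi
  have h0 : Q i ≤ Q (b + 1) := hQ (Nat.succ_le_of_lt hbi)
  have h1 : N - c + 1 ≤ Q i := hi.2
  omega

theorem Ifun_set_subset (hQQ' : Q ≤ Q') :
    {i | 1 ≤ i ∧ N - c + 1 ≤ Q i} ⊆ {i | 1 ≤ i ∧ N - c + 1 ≤ Q' i} :=
  fun i hi => ⟨hi.1, hi.2.trans (hQQ' i)⟩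

theorem Ifun_mono (hQQ' : Q ≤ Q') (hbdd : BddAbove {i | 1 ≤ i ∧ N - c + 1 ≤ Q' i}) :
    Ifun N Q c ≤ Ifun N Q' c := by
  rcases Set.eq_empty_or_nonempty {i | 1 ≤ i ∧ N - c + 1 ≤ Q i} with he | hne
  · rw [Ifun, he, csSup_empty]
    exact bot_le
  · exact csSup_le_csSup hbdd hne (Ifun_set_subset hQQ')

theorem apply_Ifun_succ_lt (hbdd : BddAbove {i | 1 ≤ i ∧ N - c + 1 ≤ Q i}) :
    Q (Ifun N Q c + 1) < N - c + 1 := by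
  by_contra! h
  have : Ifun N Q c + 1 ≤ Ifun N Q c := le_csSup hbdd ⟨Nat.le_add_left 1 _, h⟩
  omega

theorem le_apply_of_le_Ifun (hQ : Antitone Q) (hbdd : BddAbove {i | 1 ≤ i ∧ N - c + 1 ≤ Q i})
    (hpos : 1 ≤ Ifun N Q c) {i : ℕ} (hi : i ≤ Ifun N Q c) : N - c + 1 ≤ Q i := by
  have hne : {i | 1 ≤ i ∧ N - c + 1 ≤ Q i}.Nonempty := by
    by_contra! he
    rw [Ifun, he, csSup_empty] at hpos
    simp at hpos
  exact (Nat.sSup_mem hne hbdd).2.trans (hQ hi)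

end Ifun

theorem stmt_4_general (N : ℕ) (QA QB : ℕ → ℕ)
    (hmB : ∀ i j, i ≤ j → QB j ≤ QB i)
    (hAB : ∀ i, QA i ≤ QB i)
    (hfinB : ∃ b, QB (b + 1) = 0)
    (l : ℕ) :
    ∀ i, 1 ≤ i → addQ N QA l i ≤ addQ N QB l i := by
  have hanti : Antitone QB := fun i j h => hmB i j h
  have hbddB := bddAbove_Ifun_set_of_antitone (N := N) (c := l) hanti hfinB
  have hbddA := hbddB.mono (Ifun_set_subset hAB)
  intro i _
  exact ite_succ_le_ite_succ hAB (Nat.succ_le_succ (Ifun_mono hAB hbddB))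
    (fun hlt => (apply_Ifun_succ_lt hbddA).trans_le
      (le_apply_of_le_Ifun hanti hbddB (by omega) (by omega))) i

/-- Adding an item to the `l`-th shortest stack in both ensembles preserves the
componentwise ordering of the occupancy vectors. -/
theorem stmt_4 (N : ℕ) (QA QB : ℕ → ℕ)
    (hmA : ∀ i j, i ≤ j → QA j ≤ QA i)
    (hmB : ∀ i j, i ≤ j → QB j ≤ QB i)
    (hAB : ∀ i, QA i ≤ QB i)
    (hbdB : ∀ i, QB i ≤ N)
    (hfinA : ∃ b, QA (b + 1) = 0)
    (hfinB : ∃ b, QB (b + 1) = 0)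
    (l : ℕ) (hl1 : 1 ≤ l) (hlN : l ≤ N) :
    ∀ i, 1 ≤ i → addQ N QA l i ≤ addQ N QB l i :=
  stmt_4_general N QA QB hmB hAB hfinB l
end

section
/- Let Q^A, Q^B : ℕ → ℕ be non-increasing with Q^A(i) ≤ Q^B(i) ≤ N for all i, and let l, l_B ∈ {1,...,N} with l ≥ l_B. Define I_A(l) = sup {i : Q^A(i) ≥ N - l + 1} and I_B(l_B) = sup {i : Q^B(i) ≥ N - l_B + 1} (each 0 if empty), and set Q̃^A(i) = Q^A(i) + 1 iff i = I_A(l) + 1, Q̃^B(i) = Q^B(i) + 1 iff i = I_B(l_B) + 1 (other entries unchanged). If I_A(l) ≤ I_B(l_B), then Q̃^A(i) ≤ Q̃^B(i) for all i ≥ 1. -/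
/-- Ensemble A adds an item to its `l`-th shortest stack and ensemble B adds to
its `l_B`-th shortest stack with `l ≥ l_B`; if the landing height in A does not
exceed that in B (`I_A(l) ≤ I_B(l_B)`), then componentwise domination is
preserved. -/
theorem stmt_6 (N : ℕ) (QA QB : ℕ → ℕ)
    (hmA : ∀ i j, i ≤ j → QA j ≤ QA i)
    (hmB : ∀ i j, i ≤ j → QB j ≤ QB i)
    (hAB : ∀ i, QA i ≤ QB i)
    (hbdB : ∀ i, QB i ≤ N)
    (hfinA : ∃ b, QA (b + 1) = 0)
    (hfinB : ∃ b, QB (b + 1) = 0)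
    (l lB : ℕ) (hlB1 : 1 ≤ lB) (hlBl : lB ≤ l) (hlN : l ≤ N)
    (hII : Ifun N QA l ≤ Ifun N QB lB) :
    ∀ i, 1 ≤ i →
      (if i = Ifun N QA l + 1 then QA i + 1 else QA i) ≤
      (if i = Ifun N QB lB + 1 then QB i + 1 else QB i) := by
  intro i hi
  set SA : Set ℕ := {i | 1 ≤ i ∧ N - l + 1 ≤ QA i} with hSA
  set SB : Set ℕ := {i | 1 ≤ i ∧ N - lB + 1 ≤ QB i} with hSB
  obtain ⟨b, hb⟩ := hfinA
  have hBddA : BddAbove SA := by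
    refine ⟨b, fun j hj => ?_⟩
    by_contra hjb
    push_neg at hjb
    have h0 : QA j ≤ QA (b + 1) := hmA _ _ hjb
    rw [hb] at h0
    have : 1 ≤ QA j := le_trans (Nat.le_add_left 1 (N - l)) hj.2
    omega
  obtain ⟨b', hb'⟩ := hfinB
  have hBddB : BddAbove SB := by
    refine ⟨b', fun j hj => ?_⟩
    by_contra hjb
    push_neg at hjb
    have h0 : QB j ≤ QB (b' + 1) := hmB _ _ hjb
    rw [hb'] at h0
    have : 1 ≤ QB j := le_trans (Nat.le_add_left 1 (N - lB)) hj.2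
    omega
  have hIA : Ifun N QA l = sSup SA := rfl
  have hIB : Ifun N QB lB = sSup SB := rfl
  -- QA (IA + 1) ≤ N - l
  have hAnot : QA (sSup SA + 1) ≤ N - l := by
    by_contra h
    push_neg at h
    have hmem : sSup SA + 1 ∈ SA := ⟨Nat.le_add_left 1 _, h⟩
    have := le_csSup hBddA hmem
    omega
  rcases eq_or_ne i (Ifun N QA l + 1) with hi1 | hi1
  · rcases eq_or_ne i (Ifun N QB lB + 1) with hi2 | hi2
    · simp only [hi1, hi2, if_pos rfl]
      rw [← hi1, ← hi2] at *
      simp only [if_pos rfl]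
      exact Nat.add_le_add_right (hAB i) 1
    · rw [if_pos hi1, if_neg hi2]
      -- here IA < IB
      have hlt : Ifun N QA l < Ifun N QB lB := by
        rcases lt_or_eq_of_le hII with h | h
        · exact h
        · exact absurd (h ▸ hi1) hi2
      have hBne : SB.Nonempty := by
        by_contra h
        rw [Set.not_nonempty_iff_eq_empty] at h
        rw [hIB, h, csSup_empty] at hlt
        simp at hlt
      have hmemB : sSup SB ∈ SB := Nat.sSup_mem hBne hBddB
      have hQB : N - lB + 1 ≤ QB (sSup SB) := hmemB.2
      have hle : i ≤ sSup SB := by rw [hi1, hIA]; rw [hIB] at hlt; omega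
      have h1 : QB (sSup SB) ≤ QB i := hmB _ _ hle
      have h2 : QA i ≤ N - l := by rw [hi1, hIA]; exact hAnot
      have h3 : N - l ≤ N - lB := Nat.sub_le_sub_left hlBl N
      omega
  · rw [if_neg hi1]
    rcases eq_or_ne i (Ifun N QB lB + 1) with hi2 | hi2
    · rw [if_pos hi2]; exact le_trans (hAB i) (Nat.le_succ _)
    · rw [if_neg hi2]; exact hAB i
end

section
/- Under the coupling of Proposition 2, the total-mass-plus-loss comparison holds pathwise: if at each event both systems update per Rule and the componentwise ordering Q^A(t) ≤ Q^B(t) holds for all t up to the event, and if initially Σ_{i=1}^{b} Q^A_i(0) + L^A(0) ≥ Σ_{i=1}^{b'} Q^B_i(0) + L^B(0), then after any single arrival or potential departure event, Σ_{i=1}^{b} Q̃^A_i + L̃^A ≥ Σ_{i=1}^{b'} Q̃^B_i + L̃^B. In particular: at an arrival, both sides increase by exactly 1; at a potential departure from the k-th shortest queue, if the left side decreases then the right side decreases as well. -/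
/-- Pathwise total-mass-plus-loss comparison over one event: if
`Σ_{i=1}^{b'} Q^B_i + L^B ≤ Σ_{i=1}^{b} Q^A_i + L^A` and `Q^A ≤ Q^B`
componentwise, then the inequality persists after a potential departure from
the `k`-th shortest queue in both systems, and after an arrival (which
increases each side by exactly 1, either accepting the task into a queue or
counting an overflow). -/
theorem stmt_11 (N b b' : ℕ) (hbb' : b ≤ b') (QA QB : ℕ → ℕ) (LA LB : ℕ)
    (hmA : ∀ i j, i ≤ j → QA j ≤ QA i)
    (hmB : ∀ i j, i ≤ j → QB j ≤ QB i)
    (hAB : ∀ i, QA i ≤ QB i)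
    (hbdB : ∀ i, QB i ≤ N)
    (hcapA : ∀ i, b < i → QA i = 0)
    (hcapB : ∀ i, b' < i → QB i = 0)
    (k : ℕ) (hk1 : 1 ≤ k) (hkN : k ≤ N)
    (hinit : (∑ i ∈ Finset.Icc 1 b', QB i) + LB ≤ (∑ i ∈ Finset.Icc 1 b, QA i) + LA) :
    ((∑ i ∈ Finset.Icc 1 b', remQ N QB k i) + LB ≤
      (∑ i ∈ Finset.Icc 1 b, remQ N QA k i) + LA) ∧
    (∀ dSA dLA dSB dLB : ℕ, dSA + dLA = 1 → dSB + dLB = 1 →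
      ((∑ i ∈ Finset.Icc 1 b', QB i) + dSB) + (LB + dLB) ≤
      ((∑ i ∈ Finset.Icc 1 b, QA i) + dSA) + (LA + dLA)) := by
  refine ⟨?_, fun dSA dLA dSB dLB h1 h2 => by omega⟩
  by_cases hne : ({i | 1 ≤ i ∧ N - k + 1 ≤ QA i} : Set ℕ).Nonempty
  · -- A decrements, hence B decrements too
    have hbddA : BddAbove {i | 1 ≤ i ∧ N - k + 1 ≤ QA i} := by
      refine ⟨b, fun i hi => ?_⟩
      obtain ⟨hi1, hi2⟩ := hi
      by_contra h
      push_neg at h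
      have := hcapA i h
      omega
    have hbddB : BddAbove {i | 1 ≤ i ∧ N - k + 1 ≤ QB i} := by
      refine ⟨b', fun i hi => ?_⟩
      obtain ⟨hi1, hi2⟩ := hi
      by_contra h
      push_neg at h
      have := hcapB i h
      omega
    have hneB : ({i | 1 ≤ i ∧ N - k + 1 ≤ QB i} : Set ℕ).Nonempty := by
      obtain ⟨i, hi1, hi2⟩ := hne
      exact ⟨i, hi1, le_trans hi2 (hAB i)⟩
    have hIA : Ifun N QA k ∈ {i | 1 ≤ i ∧ N - k + 1 ≤ QA i} := by
      rw [Ifun]; exact Nat.sSup_mem hne hbddA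
    have hIB : Ifun N QB k ∈ {i | 1 ≤ i ∧ N - k + 1 ≤ QB i} := by
      rw [Ifun]; exact Nat.sSup_mem hneB hbddB
    obtain ⟨hA1, hA2⟩ := hIA
    obtain ⟨hB1, hB2⟩ := hIB
    have hAle : Ifun N QA k ≤ b := by
      by_contra h
      push_neg at h
      have := hcapA _ h
      omega
    have hBle : Ifun N QB k ≤ b' := by
      by_contra h
      push_neg at h
      have := hcapB _ h
      omega
    have hAmem : Ifun N QA k ∈ Finset.Icc 1 b := Finset.mem_Icc.mpr ⟨hA1, hAle⟩
    have hBmem : Ifun N QB k ∈ Finset.Icc 1 b' := Finset.mem_Icc.mpr ⟨hB1, hBle⟩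
    have hsumA : (∑ i ∈ Finset.Icc 1 b, remQ N QA k i) + 1
        = ∑ i ∈ Finset.Icc 1 b, QA i := by
      rw [← Finset.sum_erase_add _ _ hAmem, ← Finset.sum_erase_add _ QA hAmem]
      have heq : ∑ i ∈ (Finset.Icc 1 b).erase (Ifun N QA k), remQ N QA k i
          = ∑ i ∈ (Finset.Icc 1 b).erase (Ifun N QA k), QA i := by
        refine Finset.sum_congr rfl fun i hi => ?_
        have : i ≠ Ifun N QA k := Finset.ne_of_mem_erase hi
        simp [remQ, this]
      have hval : remQ N QA k (Ifun N QA k) = QA (Ifun N QA k) - 1 := by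
        simp [remQ, hA1]
      omega
    have hsumB : (∑ i ∈ Finset.Icc 1 b', remQ N QB k i) + 1
        = ∑ i ∈ Finset.Icc 1 b', QB i := by
      rw [← Finset.sum_erase_add _ _ hBmem, ← Finset.sum_erase_add _ QB hBmem]
      have heq : ∑ i ∈ (Finset.Icc 1 b').erase (Ifun N QB k), remQ N QB k i
          = ∑ i ∈ (Finset.Icc 1 b').erase (Ifun N QB k), QB i := by
        refine Finset.sum_congr rfl fun i hi => ?_
        have : i ≠ Ifun N QB k := Finset.ne_of_mem_erase hi
        simp [remQ, this]
      have hval : remQ N QB k (Ifun N QB k) = QB (Ifun N QB k) - 1 := by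
        simp [remQ, hB1]
      omega
    omega
  · -- A does not decrement
    have hIA0 : Ifun N QA k = 0 := by
      rw [Ifun, Set.not_nonempty_iff_eq_empty.mp hne]
      simp
    have hsumA : (∑ i ∈ Finset.Icc 1 b, remQ N QA k i)
        = ∑ i ∈ Finset.Icc 1 b, QA i := by
      refine Finset.sum_congr rfl fun i hi => ?_
      simp [remQ, hIA0]
    have hsumB : (∑ i ∈ Finset.Icc 1 b', remQ N QB k i)
        ≤ ∑ i ∈ Finset.Icc 1 b', QB i := by
      refine Finset.sum_le_sum fun i hi => ?_
      simp only [remQ]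
      split <;> omega
    omega
end
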